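/- If a scoring play game G has G^L ≠ ∅, and P = {.|a|b} with a > 0 and b < 0 chosen so that |b| exceeds the absolute value of every score appearing in the game tree of G, then the Left final score of G +_ℓ P is negative, so G +_ℓ P does not have the same outcome as P (whose Left final score is a > 0). -/

import Mathlib

inductive SGame : Type where
  | mk (left right : List SGame) (score : ℝ)

namespace SGame

def leftOpts : SGame → List SGame | mk L _ _ => L
def rightOpts : SGame → List SGame | mk _ R _ => R
def score : SGame → ℝ | mk _ _ s => s

mutual
  /-- Optimal final score when Left moves first. -/
  def leftScore : SGame → ℝ
    | mk [] _ s => s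
    | mk (g :: L) _ _ => maxRight g L
  termination_by G => sizeOf G
  decreasing_by all_goals (simp; try omega)
  def maxRight : SGame → List SGame → ℝ
    | g, [] => rightScore g
    | g, h :: t => max (rightScore g) (maxRight h t)
  termination_by g l => 1 + sizeOf g + sizeOf l
  decreasing_by all_goals (simp; try omega)
  /-- Optimal final score when Right moves first. -/
  def rightScore : SGame → ℝ
    | mk _ [] s => s
    | mk _ (g :: R) _ => minLeft g R
  termination_by G => sizeOf G
  decreasing_by all_goals (simp; try omega)
  def minLeft : SGame → List SGame → ℝ
    | g, [] => leftScore g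
    | g, h :: t => min (leftScore g) (minLeft h t)
  termination_by g l => 1 + sizeOf g + sizeOf l
  decreasing_by all_goals (simp; try omega)
end

/-- Long-rule disjunctive sum. -/
def sum : SGame → SGame → SGame
  | mk L1 R1 s1, mk L2 R2 s2 =>
    mk ((L1.attach.map fun g => sum g.1 (mk L2 R2 s2)) ++
        (L2.attach.map fun h => sum (mk L1 R1 s1) h.1))
       ((R1.attach.map fun g => sum g.1 (mk L2 R2 s2)) ++
        (R2.attach.map fun h => sum (mk L1 R1 s1) h.1))
       (s1 + s2)
termination_by G H => sizeOf G + sizeOf H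
decreasing_by
  all_goals simp
  · have := List.sizeOf_lt_of_mem g.2; omega
  · have := List.sizeOf_lt_of_mem h.2; omega
  · have := List.sizeOf_lt_of_mem g.2; omega
  · have := List.sizeOf_lt_of_mem h.2; omega

end SGame

namespace SGame

/-- The game `{.|0|.}`. -/
def zero : SGame := mk [] [] 0

/-- Negation: `-G = {-G^R | -G^S | -G^L}`. -/
def neg : SGame → SGame
  | mk L R s =>
    mk (R.attach.map fun g => neg g.1) (L.attach.map fun g => neg g.1) (-s)
termination_by G => sizeOf G
decreasing_by
  all_goals (have := List.sizeOf_lt_of_mem g.2; simp; omega)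

/-- Identity of game trees (options regarded as sets). -/
def Ident : SGame → SGame → Prop
  | mk L1 R1 s1, mk L2 R2 s2 =>
    s1 = s2 ∧
    (∀ g ∈ L1.attach, ∃ h ∈ L2.attach, Ident g.1 h.1) ∧
    (∀ h ∈ L2.attach, ∃ g ∈ L1.attach, Ident g.1 h.1) ∧
    (∀ g ∈ R1.attach, ∃ h ∈ R2.attach, Ident g.1 h.1) ∧
    (∀ h ∈ R2.attach, ∃ g ∈ R1.attach, Ident g.1 h.1)
termination_by G H => sizeOf G + sizeOf H
decreasing_by
  all_goals
    (have := List.sizeOf_lt_of_mem g.2; have := List.sizeOf_lt_of_mem h.2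
     simp; omega)

inductive Outcome : Type where
  | L | R | N | P | T
deriving DecidableEq

/-- The outcome class of a game, determined by the signs of its final scores. -/
noncomputable def outcome (G : SGame) : Outcome :=
  if 0 < G.leftScore then
    (if 0 < G.rightScore then .L else if G.rightScore = 0 then .L else .N)
  else if G.leftScore = 0 then
    (if 0 < G.rightScore then .L else if G.rightScore = 0 then .T else .R)
  else
    (if 0 < G.rightScore then .P else .R)

/-- `G ≥ H`. -/
def Ge (G H : SGame) : Prop :=
  ∀ X : SGame,
    (0 ≤ (H.sum X).leftScore → 0 ≤ (G.sum X).leftScore) ∧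
    (0 ≤ (H.sum X).rightScore → 0 ≤ (G.sum X).rightScore) ∧
    (0 < (H.sum X).leftScore → 0 < (G.sum X).leftScore) ∧
    (0 < (H.sum X).rightScore → 0 < (G.sum X).rightScore)

/-- `G ≤ H`. -/
def Le (G H : SGame) : Prop :=
  ∀ X : SGame,
    ((H.sum X).leftScore ≤ 0 → (G.sum X).leftScore ≤ 0) ∧
    ((H.sum X).rightScore ≤ 0 → (G.sum X).rightScore ≤ 0) ∧
    ((H.sum X).leftScore < 0 → (G.sum X).leftScore < 0) ∧
    ((H.sum X).rightScore < 0 → (G.sum X).rightScore < 0)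

/-- Game equality: same outcome in every disjunctive-sum context. -/
def gameEq (G H : SGame) : Prop :=
  ∀ X : SGame, (G.sum X).outcome = (H.sum X).outcome

end SGame

namespace SGame

/-- Every score in the game tree of `G` satisfies `p`. -/
def AllScores (p : ℝ → Prop) : SGame → Prop
  | mk L R s =>
    p s ∧ (∀ g ∈ L.attach, AllScores p g.1) ∧ (∀ g ∈ R.attach, AllScores p g.1)
termination_by G => sizeOf G
decreasing_by all_goals (have := List.sizeOf_lt_of_mem g.2; simp; omega)

/-- `G ≡ H`: identical underlying game trees, with equal scores at all
termination vertices (vertices at which at least one player has no option,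
i.e. where the play of some disjunctive sum can end). -/
def Equiv : SGame → SGame → Prop
  | mk L1 R1 s1, mk L2 R2 s2 =>
    ((L1 = [] ∨ R1 = []) → s1 = s2) ∧
    (∀ g ∈ L1.attach, ∃ h ∈ L2.attach, Equiv g.1 h.1) ∧
    (∀ h ∈ L2.attach, ∃ g ∈ L1.attach, Equiv g.1 h.1) ∧
    (∀ g ∈ R1.attach, ∃ h ∈ R2.attach, Equiv g.1 h.1) ∧
    (∀ h ∈ R2.attach, ∃ g ∈ R1.attach, Equiv g.1 h.1)
termination_by G H => sizeOf G + sizeOf H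
decreasing_by
  all_goals
    (have := List.sizeOf_lt_of_mem g.2; have := List.sizeOf_lt_of_mem h.2
     simp; omega)

/-- `G` is in canonical form: hereditarily, no dominated and no reversible options. -/
def Canonical : SGame → Prop
  | mk L R s =>
    (∀ A ∈ L, ∀ B ∈ L, A ≠ B → ¬ Ge A B) ∧
    (∀ D ∈ R, ∀ E ∈ R, D ≠ E → ¬ Le D E) ∧
    (∀ A ∈ L, ∀ Ar ∈ A.rightOpts, ¬ Le Ar (mk L R s)) ∧
    (∀ D ∈ R, ∀ Dl ∈ D.leftOpts, ¬ Ge Dl (mk L R s)) ∧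
    (∀ g ∈ L.attach, Canonical g.1) ∧ (∀ g ∈ R.attach, Canonical g.1)
termination_by G => sizeOf G
decreasing_by all_goals (have := List.sizeOf_lt_of_mem g.2; simp; omega)

/-- One reduction step: removing a dominated option or bypassing a reversible
option, at the root or in some subposition. -/
inductive Step : SGame → SGame → Prop where
  | domL {L1 L2 : List SGame} {R : List SGame} {s : ℝ} {B : SGame} (A : SGame)
      (hA : A ∈ L1 ++ L2) (h : Ge A B) :
      Step (mk (L1 ++ B :: L2) R s) (mk (L1 ++ L2) R s)
  | domR {R1 R2 : List SGame} {L : List SGame} {s : ℝ} {E : SGame} (D : SGame)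
      (hD : D ∈ R1 ++ R2) (h : Le D E) :
      Step (mk L (R1 ++ E :: R2) s) (mk L (R1 ++ R2) s)
  | revL {L1 L2 : List SGame} {R : List SGame} {s : ℝ} {A Ar : SGame}
      (hAr : Ar ∈ A.rightOpts) (h : Le Ar (mk (L1 ++ A :: L2) R s)) :
      Step (mk (L1 ++ A :: L2) R s) (mk (L1 ++ Ar.leftOpts ++ L2) R s)
  | revR {R1 R2 : List SGame} {L : List SGame} {s : ℝ} {D Dl : SGame}
      (hDl : Dl ∈ D.leftOpts) (h : Ge Dl (mk L (R1 ++ D :: R2) s)) :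
      Step (mk L (R1 ++ D :: R2) s) (mk L (R1 ++ Dl.rightOpts ++ R2) s)
  | congL {g g' : SGame} {L1 L2 R : List SGame} {s : ℝ} (h : Step g g') :
      Step (mk (L1 ++ g :: L2) R s) (mk (L1 ++ g' :: L2) R s)
  | congR {g g' : SGame} {L R1 R2 : List SGame} {s : ℝ} (h : Step g g') :
      Step (mk L (R1 ++ g :: R2) s) (mk L (R1 ++ g' :: R2) s)

end SGame

/-! Left has no move in `P`, so Left must open in `G`, reaching some `G^L + P`. Right answers
in `P`, reaching `G^L + {.|b|.}`; every score of that game has the form `t + b` with `|t| < |b|`,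
hence is negative, and a game all of whose scores are negative has negative final scores.
So each Left opening loses, whereas `P` is an `N`-position. -/

namespace SGame

@[elab_as_elim]
theorem optionInduction {p : SGame → Prop}
    (ind : ∀ L R s, (∀ g ∈ L, p g) → (∀ g ∈ R, p g) → p (mk L R s)) : ∀ G, p G
  | mk L R s => ind L R s (fun g _ => optionInduction ind g) (fun g _ => optionInduction ind g)

theorem sum_eq (G H : SGame) :
    G.sum H = mk (G.leftOpts.map (·.sum H) ++ H.leftOpts.map G.sum)
      (G.rightOpts.map (·.sum H) ++ H.rightOpts.map G.sum) (G.score + H.score) := by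
  obtain ⟨L₁, R₁, s₁⟩ := G
  obtain ⟨L₂, R₂, s₂⟩ := H
  rw [sum]
  simp [leftOpts, rightOpts, score]

theorem allScores_mk {p : ℝ → Prop} {L R : List SGame} {s : ℝ} :
    AllScores p (mk L R s) ↔ p s ∧ (∀ g ∈ L, AllScores p g) ∧ (∀ g ∈ R, AllScores p g) := by
  rw [AllScores]
  simp

theorem maxRight_lt {c : ℝ} {g : SGame} {l : List SGame}
    (h : ∀ x ∈ g :: l, rightScore x < c) : maxRight g l < c := by
  induction l generalizing g with
  | nil => rw [maxRight]; exact h g (by simp)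
  | cons g' l ih =>
    rw [maxRight]
    exact max_lt (h g (by simp)) (ih fun x hx => h x (List.mem_cons_of_mem g hx))

theorem minLeft_le {g x : SGame} {l : List SGame} (hx : x ∈ g :: l) :
    minLeft g l ≤ leftScore x := by
  induction l generalizing g with
  | nil => rw [List.mem_singleton.mp hx, minLeft]
  | cons g' l ih =>
    rw [minLeft]
    rcases List.mem_cons.mp hx with rfl | hx
    · exact min_le_left _ _
    · exact (min_le_right _ _).trans (ih hx)

theorem leftScore_lt_of_forall_rightScore_lt {G : SGame} {c : ℝ} (hG : G.leftOpts ≠ [])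
    (h : ∀ g ∈ G.leftOpts, g.rightScore < c) : G.leftScore < c := by
  obtain ⟨_ | ⟨g, l⟩, R, s⟩ := G
  · exact absurd rfl hG
  · rw [leftScore]
    exact maxRight_lt h

theorem rightScore_le_leftScore_of_mem {G g : SGame} (hg : g ∈ G.rightOpts) :
    G.rightScore ≤ g.leftScore := by
  obtain ⟨L, _ | ⟨g', l⟩, s⟩ := G
  · exact absurd hg List.not_mem_nil
  · rw [rightScore]
    exact minLeft_le hg

theorem scores_lt_of_allScores_lt {c : ℝ} (G : SGame) (hG : AllScores (· < c) G) :
    G.leftScore < c ∧ G.rightScore < c := by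
  induction G using optionInduction with
  | ind L R s ihL ihR =>
    obtain ⟨hs, hL, hR⟩ := allScores_mk.mp hG
    constructor
    · rcases L with _ | ⟨g, l⟩
      · rwa [leftScore]
      · exact leftScore_lt_of_forall_rightScore_lt (List.cons_ne_nil g l)
          fun x hx => (ihL x hx (hL x hx)).2
    · rcases R with _ | ⟨g, l⟩
      · rwa [rightScore]
      · exact (rightScore_le_leftScore_of_mem List.mem_cons_self).trans_lt
          (ihR g List.mem_cons_self (hR g List.mem_cons_self)).1

theorem allScores_sum_terminal {p q : ℝ → Prop} {b : ℝ} (hpq : ∀ t, p t → q (t + b))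
    (G : SGame) (hG : AllScores p G) : AllScores q (G.sum (mk [] [] b)) := by
  induction G using optionInduction with
  | ind L R s ihL ihR =>
    obtain ⟨hs, hL, hR⟩ := allScores_mk.mp hG
    rw [sum_eq]
    simpa [allScores_mk, leftOpts, rightOpts, score, hpq s hs] using
      ⟨fun g hg => ihL g hg (hL g hg), fun g hg => ihR g hg (hR g hg)⟩

theorem rightScore_sum_lt_zero {a b : ℝ} (hb : b < 0) {G : SGame}
    (hG : AllScores (fun t => |t| < |b|) G) :
    (G.sum (mk [] [mk [] [] b] a)).rightScore < 0 := by
  have hmem : G.sum (mk [] [] b) ∈ (G.sum (mk [] [mk [] [] b] a)).rightOpts := by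
    rw [sum_eq]
    simp [rightOpts]
  have hneg : AllScores (· < 0) (G.sum (mk [] [] b)) :=
    allScores_sum_terminal (fun t ht => by linarith [le_abs_self t, abs_of_neg hb]) G hG
  exact (rightScore_le_leftScore_of_mem hmem).trans_lt (scores_lt_of_allScores_lt _ hneg).1

theorem leftScore_sum_lt_zero {L R : List SGame} {s a b : ℝ} (hL : L ≠ []) (hb : b < 0)
    (hG : AllScores (fun t => |t| < |b|) (mk L R s)) :
    ((mk L R s).sum (mk [] [mk [] [] b] a)).leftScore < 0 := by
  have hopts : ((mk L R s).sum (mk [] [mk [] [] b] a)).leftOpts =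
      L.map (·.sum (mk [] [mk [] [] b] a)) := by
    rw [sum_eq]
    simp [leftOpts]
  refine leftScore_lt_of_forall_rightScore_lt (by simpa [hopts]) fun g hg => ?_
  obtain ⟨g, hgL, rfl⟩ := List.mem_map.mp (hopts ▸ hg)
  exact rightScore_sum_lt_zero hb ((allScores_mk.mp hG).2.1 g hgL)

theorem outcome_eq_N {G : SGame} (hl : 0 < G.leftScore) (hr : G.rightScore < 0) :
    G.outcome = .N := by
  rw [outcome, if_pos hl, if_neg hr.not_gt, if_neg hr.ne]

theorem outcome_ne_N_of_leftScore_neg {G : SGame} (hl : G.leftScore < 0) : G.outcome ≠ .N := by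
  rw [outcome, if_neg hl.not_gt, if_neg hl.ne]
  split_ifs <;> simp

theorem outcome_mk_nil_singleton {a b : ℝ} (ha : 0 < a) (hb : b < 0) :
    (mk [] [mk [] [] b] a).outcome = .N := by
  refine outcome_eq_N ?_ ?_
  · rwa [leftScore]
  · rwa [rightScore, minLeft, leftScore]

end SGame

/-- If `G` has a Left option and `P = {.|a|b}` with `a > 0`, `b < 0` and `|b|`
larger than the absolute value of every score in the game tree of `G`, then the
Left final score of `G +ℓ P` is negative, so `G +ℓ P` and `P` have different
outcomes. -/
theorem distinguishing_game (L R : List SGame) (s a b : ℝ)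
    (hL : L ≠ []) (ha : 0 < a) (hb : b < 0)
    (hbig : SGame.AllScores (fun t => |t| < |b|) (SGame.mk L R s)) :
    ((SGame.mk L R s).sum (SGame.mk [] [SGame.mk [] [] b] a)).leftScore < 0 ∧
    ((SGame.mk L R s).sum (SGame.mk [] [SGame.mk [] [] b] a)).outcome ≠
      (SGame.mk [] [SGame.mk [] [] b] a).outcome := by
  have hleft := SGame.leftScore_sum_lt_zero (a := a) hL hb hbig
  rw [SGame.outcome_mk_nil_singleton ha hb]
  exact ⟨hleft, SGame.outcome_ne_N_of_leftScore_neg hleft⟩
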